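/- Let G₁ be a simple graph on a vertex type V₁ and G₂ a simple graph on V₂, both locally finite (each vertex has a finite neighbor set). Let a₁ b₁ : V₁ → ℕ and a₂ b₂ : V₂ → ℕ be colorings, γ a type, and e₁ : V₁ → γ, e₂ : V₂ → γ arbitrary auxiliary data. Define the updated colorings a₁' v = (a₁ v, (G₁.neighborFinset v).val.map a₁), a₂' w = (a₂ w, (G₂.neighborFinset w).val.map a₂) (valued in ℕ × Multiset ℕ), and b₁' v = (b₁ v, (G₁.neighborFinset v).val.map b₁, e₁ v), b₂' w = (b₂ w, (G₂.neighborFinset w).val.map b₂, e₂ w) (valued in ℕ × Multiset ℕ × γ). If for all v : V₁ and w : V₂, b₁ v = b₂ w implies a₁ v = a₂ w, then for all v : V₁ and w : V₂, b₁' v = b₂' w implies a₁' v = a₂' w. -/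

import Mathlib

theorem Multiset.map_eq_map_of_map_eq_map {α β γ δ : Type*} {s : Multiset α} {t : Multiset β}
    {b₁ : α → γ} {b₂ : β → γ} {a₁ : α → δ} {a₂ : β → δ}
    (h : ∀ x y, b₁ x = b₂ y → a₁ x = a₂ y) (hb : s.map b₁ = t.map b₂) :
    s.map a₁ = t.map a₂ := by
  rw [← Multiset.rel_eq, Multiset.rel_map] at hb ⊢
  exact hb.mono fun x _ y _ => h x y

/-- Inductive step of Theorem 1: cross-graph color refinement is preserved under one
WL-style update step, where the finer (CCNN) update additionally records arbitrary data. -/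
theorem color_refinement_update_step {V₁ V₂ γ : Type*}
    (G₁ : SimpleGraph V₁) (G₂ : SimpleGraph V₂)
    [G₁.LocallyFinite] [G₂.LocallyFinite]
    (a₁ b₁ : V₁ → ℕ) (a₂ b₂ : V₂ → ℕ) (e₁ : V₁ → γ) (e₂ : V₂ → γ)
    (h : ∀ (v : V₁) (w : V₂), b₁ v = b₂ w → a₁ v = a₂ w) :
    ∀ (v : V₁) (w : V₂),
      (b₁ v, (G₁.neighborFinset v).val.map b₁, e₁ v) =
        (b₂ w, (G₂.neighborFinset w).val.map b₂, e₂ w) →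
      (a₁ v, (G₁.neighborFinset v).val.map a₁) =
        (a₂ w, (G₂.neighborFinset w).val.map a₂) := by
  intro v w hvw
  simp only [Prod.mk.injEq] at hvw
  obtain ⟨hb, hnbhd, -⟩ := hvw
  exact Prod.ext (h v w hb) (Multiset.map_eq_map_of_map_eq_map h hnbhd)
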